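/- With the same hypotheses, if f : [0,1] → 𝔽 is continuous with f(0) = f(1) = 0, then lim_{t→∞} ‖f(u_t) x‖ = 0 for every x ∈ J. -/

import Mathlib

/-!
Approximate `f` uniformly on `[0,1]` by `s ↦ r(s) (s - 1)` with `r` a polynomial: this is possible
because `f 1 = 0` (Weierstrass, then divide by `X - 1` after correcting the constant term).
For such a function `cfc (r · (· - 1)) (u t) * x = cfc r (u t) * (u t * x - x)`, which tends to `0`
because `‖cfc r (u t)‖` is bounded by the supremum of `|r|` on `[0,1]` and `u t` is an approximate
unit for `x`. The uniform error costs at most `ε ‖x‖`, since `cfc` is isometric.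
-/

open Filter Topology Polynomial Set

theorem tendsto_zero_of_forall_exists_eventually_norm_sub_le {ι E : Type*}
    [SeminormedAddCommGroup E] {l : Filter ι} {F : ι → E}
    (h : ∀ ε > 0, ∃ G : ι → E, Tendsto G l (𝓝 0) ∧ ∀ᶠ t in l, ‖F t - G t‖ ≤ ε) :
    Tendsto F l (𝓝 0) := by
  refine Metric.tendsto_nhds.2 fun ε hε => ?_
  obtain ⟨G, hG, hFG⟩ := h (ε / 2) (half_pos hε)
  filter_upwards [hFG, Metric.tendsto_nhds.1 hG (ε / 2) (half_pos hε)] with t hFGt hGt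
  rw [dist_zero_right] at hGt ⊢
  calc ‖F t‖ ≤ ‖G t‖ + ‖F t - G t‖ := norm_le_norm_add_norm_sub' _ _
    _ < ε := by linarith

theorem exists_polynomial_mul_sub_near {f : ℝ → ℝ} {a b c : ℝ} (hf : ContinuousOn f (Icc a b))
    (hc : c ∈ Icc a b) (hfc : f c = 0) {ε : ℝ} (hε : 0 < ε) :
    ∃ r : ℝ[X], ∀ s ∈ Icc a b, |f s - r.eval s * (s - c)| ≤ ε := by
  obtain ⟨p, hp⟩ := exists_polynomial_near_of_continuousOn a b f hf (ε / 2) (half_pos hε)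
  set q : ℝ[X] := p - C (p.eval c)
  have hq : (X - C c) * (q /ₘ (X - C c)) = q :=
    mul_divByMonic_eq_iff_isRoot.2 (by simp [q])
  refine ⟨q /ₘ (X - C c), fun s hs => ?_⟩
  have heval : (q /ₘ (X - C c)).eval s * (s - c) = p.eval s - p.eval c := by
    simpa [q, mul_comm] using congrArg (eval s) hq
  have hps := abs_lt.1 (hp s hs)
  have hpc := abs_lt.1 (hp c hc)
  rw [heval, abs_le]
  constructor <;> linarith

theorem spectrum_subset_Icc_of_nonneg_of_le_one {A : Type*} [CStarAlgebra A] [PartialOrder A]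
    [StarOrderedRing A] {a : A} (h₀ : 0 ≤ a) (h₁ : a ≤ 1) : spectrum ℝ a ⊆ Icc 0 1 :=
  fun s hs => ⟨spectrum_nonneg_of_nonneg h₀ hs, (CFC.le_one_iff a h₀.isSelfAdjoint).1 h₁ s hs⟩

section CFC

variable {A : Type*} [NormedRing A] [StarRing A] [NormedAlgebra ℝ A]
  [IsometricContinuousFunctionalCalculus ℝ A IsSelfAdjoint]

theorem cfc_mul_sub_one_mul (g : ℝ → ℝ) {a : A} (ha : IsSelfAdjoint a)
    (hg : ContinuousOn g (spectrum ℝ a)) (x : A) :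
    cfc (fun s => g s * (s - 1)) a * x = cfc g a * (a * x - x) := by
  rw [cfc_mul g (fun s => s - 1) a, cfc_sub (fun s => s) (fun _ => 1) a, cfc_id' ℝ a,
    cfc_const_one ℝ a, mul_assoc, sub_mul, one_mul]

theorem norm_cfc_mul_sub_cfc_mul_le {f g : ℝ → ℝ} {a : A} {δ : ℝ} (hδ : 0 ≤ δ)
    (hf : ContinuousOn f (spectrum ℝ a)) (hg : ContinuousOn g (spectrum ℝ a))
    (hfg : ∀ s ∈ spectrum ℝ a, |f s - g s| ≤ δ) (x : A) :
    ‖cfc f a * x - cfc g a * x‖ ≤ δ * ‖x‖ := by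
  rw [← sub_mul, ← cfc_sub f g a]
  exact (norm_mul_le _ _).trans (by gcongr; exact norm_cfc_le hδ hfg)

theorem tendsto_cfc_mul_sub_one_mul {ι : Type*} {l : Filter ι} {u : ι → A} {K : Set ℝ}
    (hK : IsCompact K) (hu : ∀ t, IsSelfAdjoint (u t)) (hspec : ∀ t, spectrum ℝ (u t) ⊆ K)
    {g : ℝ → ℝ} (hg : ContinuousOn g K) {x : A}
    (hx : Tendsto (fun t => ‖u t * x - x‖) l (𝓝 0)) :
    Tendsto (fun t => cfc (fun s => g s * (s - 1)) (u t) * x) l (𝓝 0) := by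
  obtain ⟨M, hM⟩ := hK.exists_bound_of_continuousOn hg
  have hbound : ∀ t, ‖cfc g (u t)‖ ≤ max M 0 := fun t =>
    norm_cfc_le (le_max_right _ _) fun s hs => (hM s (hspec t hs)).trans (le_max_left _ _)
  rw [tendsto_zero_iff_norm_tendsto_zero]
  refine squeeze_zero (fun _ => norm_nonneg _) (fun t => ?_) (by simpa using hx.const_mul (max M 0))
  rw [cfc_mul_sub_one_mul g (hu t) (hg.mono (hspec t))]
  exact (norm_mul_le _ _).trans (by gcongr; exact hbound t)

end CFC

theorem quasicentral_cfc_vanish_tendsto_general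
    {B : Type*} [CStarAlgebra B] [PartialOrder B] [StarOrderedRing B]
    (J : TwoSidedIdeal B)
    (u : ℝ → B)
    (hu_nonneg : ∀ t, 0 ≤ u t)
    (hu_le_one : ∀ t, u t ≤ 1)
    (hu_approx : ∀ x ∈ J, Tendsto (fun t => ‖u t * x - x‖) atTop (𝓝 0))
    (f : ℝ → ℝ) (hf : ContinuousOn f (Set.Icc 0 1)) (hf1 : f 1 = 0) :
    ∀ x ∈ J, Tendsto (fun t => ‖cfc f (u t) * x‖) atTop (𝓝 0) := by
  intro x hx
  have hsa : ∀ t, IsSelfAdjoint (u t) := fun t => (hu_nonneg t).isSelfAdjoint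
  have hspec t : spectrum ℝ (u t) ⊆ Icc 0 1 :=
    spectrum_subset_Icc_of_nonneg_of_le_one (hu_nonneg t) (hu_le_one t)
  rw [← tendsto_zero_iff_norm_tendsto_zero]
  refine tendsto_zero_of_forall_exists_eventually_norm_sub_le fun ε hε => ?_
  have hδ : 0 < ε / (‖x‖ + 1) := by positivity
  obtain ⟨r, hr⟩ := exists_polynomial_mul_sub_near hf (right_mem_Icc.2 zero_le_one) hf1 hδ
  refine ⟨_, tendsto_cfc_mul_sub_one_mul isCompact_Icc hsa hspec r.continuous.continuousOn
    (hu_approx x hx), Eventually.of_forall fun t => ?_⟩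
  calc _ ≤ ε / (‖x‖ + 1) * ‖x‖ :=
        norm_cfc_mul_sub_cfc_mul_le hδ.le (hf.mono (hspec t)) (by fun_prop)
          (fun s hs => hr s (hspec t hs)) x
    _ ≤ ε := by
        rw [div_mul_eq_mul_div, div_le_iff₀ (by positivity)]
        nlinarith [norm_nonneg x]

/-- If `(u t)` is a quasicentral approximate unit for a closed two-sided
ideal `J` in a C*-algebra `B`, and `f : [0,1] → ℝ` is continuous with `f 0 = f 1 = 0`,
then `lim_{t→∞} ‖f(u t) * x‖ = 0` for every `x ∈ J` (where `f(u t)` is defined via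
continuous functional calculus). -/
theorem quasicentral_cfc_vanish_tendsto
    {B : Type*} [CStarAlgebra B] [PartialOrder B] [StarOrderedRing B]
    (J : TwoSidedIdeal B) (hJclosed : IsClosed (J : Set B))
    (u : ℝ → B)
    (hu_cont : Continuous u)
    (hu_mem : ∀ t, u t ∈ J)
    (hu_nonneg : ∀ t, 0 ≤ u t)
    (hu_le_one : ∀ t, u t ≤ 1)
    (hu_approx : ∀ x ∈ J, Tendsto (fun t => ‖u t * x - x‖) atTop (𝓝 0))
    (hu_quasicentral : ∀ b : B, Tendsto (fun t => ‖u t * b - b * u t‖) atTop (𝓝 0))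
    (f : ℝ → ℝ) (hf : ContinuousOn f (Set.Icc 0 1)) (hf0 : f 0 = 0) (hf1 : f 1 = 0) :
    ∀ x ∈ J, Tendsto (fun t => ‖cfc f (u t) * x‖) atTop (𝓝 0) :=
  quasicentral_cfc_vanish_tendsto_general J u hu_nonneg hu_le_one hu_approx f hf hf1
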